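/- arXiv:1204.1543 — 2 statements merged into one kernel-verified Lean document; each statement's English description precedes it below -/
import Mathlib

section
/- Let K be a centrally symmetric convex 2n-gon a₁...a_{2n} in ℝ² centered at the origin. For each i = 1, ..., n let vᵢ = a_{i+1} - aᵢ, let fᵢ : ℝ² → ℝ be the linear function equal to 1 on the side [aᵢ, a_{i+1}], and let pᵢ = 2·Area(triangle(0, aᵢ, a_{i+1}))/Area(K). Then for all 1 ≤ i < j ≤ n, pᵢ pⱼ |fᵢ ∧ fⱼ| = |vᵢ ∧ vⱼ| / Area(K)². -/
open MeasureTheory Finset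

noncomputable def area (s : Set (ℝ × ℝ)) : ℝ := (volume s).toReal

def det2 (u v : ℝ × ℝ) : ℝ := u.1 * v.2 - u.2 * v.1

/-- The wedge `f ∧ g` of two linear functionals on ℝ², identified with the scalar
`f(e₁)g(e₂) − f(e₂)g(e₁)`. -/
def wedgeF (f g : (ℝ × ℝ) →ₗ[ℝ] ℝ) : ℝ := f (1, 0) * g (0, 1) - f (0, 1) * g (1, 0)

/-!
With `Dᵢ = det (aᵢ, aᵢ₊₁)`, the triangle `0 aᵢ aᵢ₊₁` is the image of the standard triangle
(of area `1/2`) under a linear map of determinant `Dᵢ`, so `pᵢ = |Dᵢ| / Area K`.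
Solving `fᵢ aᵢ = fᵢ aᵢ₊₁ = 1` by Cramer's rule gives `Dᵢ fᵢ = (vᵢ.2, -vᵢ.1)` in coordinates,
hence `(fᵢ ∧ fⱼ) Dᵢ Dⱼ = vᵢ ∧ vⱼ` and the identity follows.
-/

theorem volume_standardTriangle :
    volume {p : ℝ × ℝ | 0 ≤ p.1 ∧ 0 ≤ p.2 ∧ p.1 + p.2 ≤ 1} = ENNReal.ofReal (1 / 2) := by
  set S : Set (ℝ × ℝ) := {p | 0 ≤ p.1 ∧ 0 ≤ p.2 ∧ p.1 + p.2 ≤ 1} with hS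
  have hsection (x : ℝ) :
      volume (Prod.mk x ⁻¹' S) = (Set.Icc 0 1).indicator (fun x => ENNReal.ofReal (1 - x)) x := by
    by_cases hx : 0 ≤ x
    · have hslice : Prod.mk x ⁻¹' S = Set.Icc 0 (1 - x) := by
        ext y
        simp only [hS, Set.mem_preimage, Set.mem_ofPred_eq, Set.mem_Icc]
        constructor
        · rintro ⟨-, hy, hxy⟩; exact ⟨hy, by linarith⟩
        · rintro ⟨hy, hxy⟩; exact ⟨hx, hy, by linarith⟩
      rw [hslice, Real.volume_Icc, sub_zero]
      by_cases hx1 : x ≤ 1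
      · rw [Set.indicator_of_mem (show x ∈ Set.Icc 0 1 from ⟨hx, hx1⟩)]
      · rw [Set.indicator_of_notMem (fun h => hx1 h.2), ENNReal.ofReal_eq_zero]; linarith
    · have hslice : Prod.mk x ⁻¹' S = ∅ := by
        ext y; simp [hS, hx]
      rw [hslice, measure_empty, Set.indicator_of_notMem (fun h => hx h.1)]
  have hmeas : MeasurableSet S := by
    measurability
  rw [Measure.volume_eq_prod, Measure.prod_apply hmeas]
  simp_rw [hsection]
  rw [lintegral_indicator measurableSet_Icc, ← ofReal_integral_eq_lintegral_ofReal,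
    integral_Icc_eq_integral_Ioc, ← intervalIntegral.integral_of_le zero_le_one]
  · rw [intervalIntegral.integral_sub intervalIntegrable_const
      intervalIntegral.intervalIntegrable_id]
    norm_num
  · exact (continuous_const.sub continuous_id).integrableOn_Icc
  · exact (ae_restrict_iff' measurableSet_Icc).mpr
      (Filter.Eventually.of_forall fun x hx => by simp [hx.2])

theorem convexHull_standardTriangle_vertices :
    convexHull ℝ {0, (1, 0), (0, 1)} = {p : ℝ × ℝ | 0 ≤ p.1 ∧ 0 ≤ p.2 ∧ p.1 + p.2 ≤ 1} := by
  refine Set.Subset.antisymm (convexHull_min ?_ ?_) ?_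
  · rintro p (rfl | rfl | rfl) <;> norm_num
  · rintro ⟨x, y⟩ ⟨hx, hy, hxy⟩ ⟨x', y'⟩ ⟨hx', hy', hxy'⟩ s t hs ht hst
    simp only [Set.mem_ofPred_eq, Prod.fst_add, Prod.snd_add, Prod.smul_fst, Prod.smul_snd,
      smul_eq_mul]
    refine ⟨by positivity, by positivity, by nlinarith⟩
  · rintro ⟨x, y⟩ ⟨hx, hy, hxy⟩
    have hcomb : ((x, y) : ℝ × ℝ) = ∑ i, ![1 - x - y, x, y] i • ![0, (1, 0), (0, 1)] i := by
      simp [Fin.sum_univ_three]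
    rw [hcomb]
    have hweights : ∑ i, ![1 - x - y, x, y] i = 1 := by
      simp only [Fin.sum_univ_three, Matrix.cons_val_zero, Matrix.cons_val_one, Matrix.cons_val]
      ring
    refine (convex_convexHull ℝ _).sum_mem (fun i _ => ?_) hweights fun i _ => ?_
    · fin_cases i <;> simp only [Fin.isValue, Fin.zero_eta, Fin.mk_one, Fin.reduceFinMk,
      Matrix.cons_val_zero, Matrix.cons_val_one, Matrix.cons_val, sub_nonneg] <;> linarith
    · fin_cases i <;> apply subset_convexHull <;> simp

theorem area_triangle_origin (u w : ℝ × ℝ) :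
    area (convexHull ℝ {0, u, w}) = |det2 u w| / 2 := by
  set T : (ℝ × ℝ) →ₗ[ℝ] (ℝ × ℝ) :=
    Matrix.toLin (Module.Basis.finTwoProd ℝ) (Module.Basis.finTwoProd ℝ) !![u.1, w.1; u.2, w.2]
  have hdet : LinearMap.det T = det2 u w := by
    rw [LinearMap.det_toLin, Matrix.det_fin_two_of, det2]; ring
  have himage : T '' convexHull ℝ {0, (1, 0), (0, 1)} = convexHull ℝ {0, u, w} := by
    rw [LinearMap.image_convexHull, Set.image_insert_eq, Set.image_insert_eq, Set.image_singleton]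
    simp only [T, Matrix.toLin_finTwoProd_apply, Prod.fst_zero, Prod.snd_zero, mul_zero, mul_one,
      add_zero, zero_add, Prod.mk.eta, Prod.mk_zero_zero]
  rw [area, ← himage, Measure.addHaar_image_linearMap, hdet, convexHull_standardTriangle_vertices]
  rw [volume_standardTriangle, ← ENNReal.ofReal_mul (abs_nonneg _),
    ENNReal.toReal_ofReal (by positivity)]
  ring

theorem det2_mul_apply_fst (f : (ℝ × ℝ) →ₗ[ℝ] ℝ) (u w : ℝ × ℝ) :
    det2 u w * f (1, 0) = w.2 * f u - u.2 * f w := by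
  have h : det2 u w • ((1 : ℝ), (0 : ℝ)) = w.2 • u - u.2 • w := by
    ext <;> simp only [det2, Prod.smul_mk, smul_eq_mul, mul_one, mul_zero, Prod.fst_sub,
      Prod.snd_sub, Prod.smul_fst, Prod.smul_snd] <;> ring
  rw [← smul_eq_mul, ← map_smul, h, map_sub, map_smul, map_smul, smul_eq_mul, smul_eq_mul]

theorem det2_mul_apply_snd (f : (ℝ × ℝ) →ₗ[ℝ] ℝ) (u w : ℝ × ℝ) :
    det2 u w * f (0, 1) = u.1 * f w - w.1 * f u := by
  have h : det2 u w • ((0 : ℝ), (1 : ℝ)) = u.1 • w - w.1 • u := by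
    ext <;> simp only [det2, Prod.smul_mk, smul_eq_mul, mul_one, mul_zero, Prod.fst_sub,
      Prod.snd_sub, Prod.smul_fst, Prod.smul_snd] <;> ring
  rw [← smul_eq_mul, ← map_smul, h, map_sub, map_smul, map_smul, smul_eq_mul, smul_eq_mul]

theorem wedgeF_mul_det2_mul_det2 {f g : (ℝ × ℝ) →ₗ[ℝ] ℝ} {u w u' w' : ℝ × ℝ}
    (hu : f u = 1) (hw : f w = 1) (hu' : g u' = 1) (hw' : g w' = 1) :
    wedgeF f g * (det2 u w * det2 u' w') = det2 (w - u) (w' - u') := by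
  have hf₁ := det2_mul_apply_fst f u w
  have hf₂ := det2_mul_apply_snd f u w
  have hg₁ := det2_mul_apply_fst g u' w'
  have hg₂ := det2_mul_apply_snd g u' w'
  rw [hu, hw] at hf₁ hf₂
  rw [hu', hw'] at hg₁ hg₂
  rw [wedgeF, show det2 (w - u) (w' - u') =
    (w.1 - u.1) * (w'.2 - u'.2) - (w.2 - u.2) * (w'.1 - u'.1) from rfl]
  linear_combination (det2 u' w' * g (0, 1)) * hf₁ + (w.2 - u.2) * hg₂
    - (det2 u' w' * g (1, 0)) * hf₂ - (u.1 - w.1) * hg₁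

theorem weighted_wedge_eq_det_div_area_sq_general
    (n : ℕ) (a : ℕ → ℝ × ℝ)
    (v : ℕ → ℝ × ℝ) (hv : ∀ i, v i = a (i + 1) - a i)
    (K : Set (ℝ × ℝ))
    (f : ℕ → (ℝ × ℝ) →ₗ[ℝ] ℝ)
    (hf : ∀ i, ∀ x ∈ segment ℝ (a i) (a (i + 1)), f i x = 1)
    (p : ℕ → ℝ)
    (hp : ∀ i, p i = 2 * area (convexHull ℝ {(0 : ℝ × ℝ), a i, a (i + 1)}) / area K) :
    ∀ i j, i < j → j < n →
      p i * p j * |wedgeF (f i) (f j)| = |det2 (v i) (v j)| / (area K) ^ 2 := by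
  intro i j _ _
  have hp_det (k : ℕ) : p k = |det2 (a k) (a (k + 1))| / area K := by
    rw [hp, area_triangle_origin]; ring
  have hwedge := wedgeF_mul_det2_mul_det2
    (hf i _ (left_mem_segment ℝ _ _)) (hf i _ (right_mem_segment ℝ _ _))
    (hf j _ (left_mem_segment ℝ _ _)) (hf j _ (right_mem_segment ℝ _ _))
  rw [hp_det, hp_det, hv, hv, ← hwedge, abs_mul, abs_mul]
  ring

/-- First part of Lemma 2.3 of Burago–Ivanov: for a centrally symmetric convex `2n`-gon
`K = a₁…a_{2n}` centered at the origin (vertices in counterclockwise cyclic order,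
no three consecutive vertices collinear), with side vectors `vᵢ`, supporting functionals
`fᵢ = 1` on the side `[aᵢ, a_{i+1}]`, and weights `pᵢ = 2·Area(triangle(0,aᵢ,a_{i+1}))/Area K`,
one has `pᵢ pⱼ |fᵢ ∧ fⱼ| = |vᵢ ∧ vⱼ| / (Area K)²` for all `i < j ≤ n`. -/
theorem weighted_wedge_eq_det_div_area_sq
    (n : ℕ) (hn : 1 ≤ n) (a : ℕ → ℝ × ℝ)
    (hsym : ∀ i, a (i + n) = - a i)
    (hconv : ∀ i, 0 < det2 (a (i + 1) - a i) (a (i + 2) - a (i + 1)))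
    (v : ℕ → ℝ × ℝ) (hv : ∀ i, v i = a (i + 1) - a i)
    (K : Set (ℝ × ℝ)) (hK : K = convexHull ℝ (a '' Set.Iio (2 * n)))
    (f : ℕ → (ℝ × ℝ) →ₗ[ℝ] ℝ)
    (hf : ∀ i, ∀ x ∈ segment ℝ (a i) (a (i + 1)), f i x = 1)
    (p : ℕ → ℝ)
    (hp : ∀ i, p i = 2 * area (convexHull ℝ {(0 : ℝ × ℝ), a i, a (i + 1)}) / area K) :
    ∀ i j, i < j → j < n →
      p i * p j * |wedgeF (f i) (f j)| = |det2 (v i) (v j)| / (area K) ^ 2 :=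
  weighted_wedge_eq_det_div_area_sq_general n a v hv K f hf p hp
end

section
/- Let V be a finite-dimensional real vector space and A : GC₂(V) → ℝ₊ a 2-dimensional density (continuous, A(λσ) = |λ|A(σ)) on the cone GC₂(V) ⊂ Λ²V of simple 2-vectors. Then A admits a convex extension to Λ²V if and only if every 2-dimensional linear subspace P ⊂ V admits a calibrator, i.e., a 2-form ω ∈ Λ²V* with |ω(σ)| ≤ A(σ) for all simple 2-vectors σ, with equality whenever σ ∈ Λ²P. -/
open MeasureTheory

/-- The simple (decomposable) 2-vector `v ∧ w`, as an element of the second exterior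
power `⋀[ℝ]^2 V`. -/
noncomputable def simpleWedge {V : Type*} [AddCommGroup V] [Module ℝ V] (v w : V) :
    ⋀[ℝ]^2 V :=
  ⟨ExteriorAlgebra.ιMulti ℝ 2 ![v, w],
    ExteriorAlgebra.ιMulti_range ℝ 2 (Set.mem_range_self _)⟩

/-!
If `g` is a convex extension of `A` and `P = span {x, y}`, a subgradient `ω` of `g` at
`σ₀ = x ∧ y` is a calibrator for `P`: as `g` is positively homogeneous along the ray through `σ₀`,
`ω` supports `g` there (`ω ≤ g`, `ω σ₀ = g σ₀`), and since `A` is even on simple 2-vectors,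
`ω ≤ A` on them upgrades to `|ω| ≤ A`. Conversely, the supremum of all 2-forms `ω` with
`|ω| ≤ A` on simple 2-vectors is convex, is finite since simple 2-vectors span `⋀²V`, is at most
`A` on them, and the calibrator of `span {v, w}` shows that it is at least `A` at `v ∧ w`.
-/

open Set Submodule

def IsSubgradientAt {E : Type*} [AddCommGroup E] [Module ℝ E] (g : E → ℝ) (ℓ : E →ₗ[ℝ] ℝ)
    (x₀ : E) : Prop :=
  ∀ x, g x₀ + ℓ (x - x₀) ≤ g x

section Subgradient

theorem ConvexOn.exists_isSubgradientAt_of_normed {E : Type*} [NormedAddCommGroup E]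
    [NormedSpace ℝ E] [FiniteDimensional ℝ E] {g : E → ℝ} (hg : ConvexOn ℝ univ g) (x₀ : E) :
    ∃ ℓ, IsSubgradientAt g ℓ x₀ := by
  set S : Set (E × ℝ) := {p | p.1 ∈ univ ∧ g p.1 < p.2}
  have hS : IsOpen S := by
    simpa [S] using isOpen_lt (hg.locallyLipschitz.continuous.comp continuous_fst) continuous_snd
  -- separate `(x₀, g x₀)` from the open strict epigraph; the separating functional must have
  -- negative vertical component `c`, and `-L / c` is the subgradient
  obtain ⟨f, hf⟩ := geometric_hahn_banach_open_point hg.convex_strict_epigraph hS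
    (by simp [S] : (x₀, g x₀) ∉ S)
  set L : E →ₗ[ℝ] ℝ := f.toLinearMap ∘ₗ LinearMap.inl ℝ E ℝ
  set c := f (0, 1)
  have hf_apply : ∀ x t, f (x, t) = L x + t * c := fun x t => by
    have : (x, t) = LinearMap.inl ℝ E ℝ x + t • ((0 : E), (1 : ℝ)) := by ext <;> simp
    rw [this, map_add, map_smul, smul_eq_mul, mul_comm]
    rfl
  have hlt : ∀ x t, g x < t → L x + t * c < L x₀ + g x₀ * c := fun x t h => by
    simpa only [hf_apply] using hf (x, t) ⟨mem_univ x, h⟩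
  have hc : c < 0 := by linarith [hlt x₀ (g x₀ + 1) (by linarith)]
  refine ⟨(-c)⁻¹ • L, fun x => le_of_forall_gt_imp_ge_of_dense fun t ht => ?_⟩
  have : (-c)⁻¹ * (L x - L x₀) ≤ t - g x₀ := by
    rw [inv_mul_le_iff₀ (by linarith)]
    linarith [hlt x t ht]
  simp only [LinearMap.smul_apply, map_sub, smul_eq_mul]
  linarith

variable {E : Type*} [AddCommGroup E] [Module ℝ E] [FiniteDimensional ℝ E] {g : E → ℝ}

theorem ConvexOn.exists_isSubgradientAt (hg : ConvexOn ℝ univ g) (x₀ : E) :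
    ∃ ℓ, IsSubgradientAt g ℓ x₀ := by
  let e := (Module.finBasis ℝ E).equivFun
  obtain ⟨ℓ, hℓ⟩ := (hg.comp_linearMap e.symm.toLinearMap).exists_isSubgradientAt_of_normed (e x₀)
  exact ⟨ℓ ∘ₗ e.toLinearMap, fun x => by simpa using hℓ (e x)⟩

theorem ConvexOn.exists_linearMap_le_eq_of_ray (hg : ConvexOn ℝ univ g) {x₀ : E}
    (hx₀ : ∀ t : ℝ, 0 ≤ t → g (t • x₀) = t * g x₀) :
    ∃ ℓ : E →ₗ[ℝ] ℝ, (∀ x, ℓ x ≤ g x) ∧ ℓ x₀ = g x₀ := by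
  obtain ⟨ℓ, hℓ⟩ := hg.exists_isSubgradientAt x₀
  have hg0 : g 0 = 0 := by simpa using hx₀ 0 le_rfl
  have h2 := hℓ ((2 : ℝ) • x₀)
  rw [hx₀ 2 zero_le_two, two_smul, add_sub_cancel_right] at h2
  have h0 := hℓ 0
  rw [zero_sub, map_neg, hg0] at h0
  have hℓx₀ : ℓ x₀ = g x₀ := by linarith
  refine ⟨ℓ, fun x => ?_, hℓx₀⟩
  linarith [hℓ x, map_sub ℓ x x₀]

end Subgradient

section SupOfLinear

variable {E : Type*} [AddCommGroup E] [Module ℝ E]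

theorem convexOn_ciSup_linearMap {ι : Type*} [Nonempty ι] {f : ι → E →ₗ[ℝ] ℝ}
    (hf : ∀ x, BddAbove (range fun i => f i x)) : ConvexOn ℝ univ fun x => ⨆ i, f i x := by
  refine ⟨convex_univ, fun x _ y _ a b ha hb _ => ciSup_le fun i => ?_⟩
  simp only [map_add, map_smul, smul_eq_mul]
  gcongr
  exacts [le_ciSup (hf x) i, le_ciSup (hf y) i]

theorem exists_abs_le_of_span_eq_top {C : Set E} (hC : span ℝ C = ⊤) (A : E → ℝ) (x : E) :
    ∃ M, ∀ ω : E →ₗ[ℝ] ℝ, (∀ τ ∈ C, |ω τ| ≤ A τ) → |ω x| ≤ M := by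
  have hx : x ∈ span ℝ C := hC ▸ mem_top
  induction hx using span_induction with
  | mem τ hτ => exact ⟨A τ, fun ω hω => hω τ hτ⟩
  | zero => exact ⟨0, fun ω _ => by simp⟩
  | add y z _ _ hy hz =>
    obtain ⟨M, hM⟩ := hy
    obtain ⟨N, hN⟩ := hz
    refine ⟨M + N, fun ω hω => ?_⟩
    rw [map_add]
    exact (abs_add_le _ _).trans (add_le_add (hM ω hω) (hN ω hω))
  | smul a y _ hy =>
    obtain ⟨M, hM⟩ := hy
    refine ⟨|a| * M, fun ω hω => ?_⟩
    rw [map_smul, smul_eq_mul, abs_mul]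
    exact mul_le_mul_of_nonneg_left (hM ω hω) (abs_nonneg a)

theorem exists_convexOn_eq_of_forall_exists_calibrator {C : Set E} (hC : span ℝ C = ⊤)
    {A : E → ℝ} (h : ∀ σ ∈ C, ∃ ω : E →ₗ[ℝ] ℝ, (∀ τ ∈ C, |ω τ| ≤ A τ) ∧ |ω σ| = A σ) :
    ∃ g : E → ℝ, ConvexOn ℝ univ g ∧ ∀ σ ∈ C, g σ = A σ := by
  let Ω := {ω : E →ₗ[ℝ] ℝ // ∀ τ ∈ C, |ω τ| ≤ A τ}
  have : Nonempty Ω := ⟨⟨0, fun τ hτ => by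
    obtain ⟨ω, hω, -⟩ := h τ hτ
    simpa using (abs_nonneg _).trans (hω τ hτ)⟩⟩
  have hbdd (x : E) : BddAbove (range fun ω : Ω => ω.1 x) := by
    obtain ⟨M, hM⟩ := exists_abs_le_of_span_eq_top hC A x
    exact ⟨M, forall_mem_range.2 fun ω => (le_abs_self _).trans (hM ω.1 ω.2)⟩
  have habs_le (ω : Ω) (x : E) : |ω.1 x| ≤ ⨆ ω : Ω, ω.1 x := by
    refine abs_le'.2 ⟨le_ciSup (hbdd x) ω, ?_⟩
    exact le_ciSup (f := fun ω : Ω => ω.1 x) (hbdd x) ⟨-ω.1, fun τ hτ => by simpa using ω.2 τ hτ⟩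
  refine ⟨fun x => ⨆ ω : Ω, ω.1 x, convexOn_ciSup_linearMap hbdd, fun σ hσ => le_antisymm ?_ ?_⟩
  · exact ciSup_le fun ω => (le_abs_self _).trans (ω.2 σ hσ)
  · obtain ⟨ω, hωC, hωσ⟩ := h σ hσ
    exact hωσ ▸ habs_le ⟨ω, hωC⟩ σ

end SupOfLinear

section PairSpan

variable {K V : Type*} [DivisionRing K] [AddCommGroup V] [Module K V]

theorem finrank_span_pair {v w : V} (h : LinearIndependent K ![v, w]) :
    Module.finrank K (span K {v, w}) = 2 := by
  rw [← Matrix.range_cons_cons_empty v w ![]]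
  exact finrank_span_eq_card h

theorem Submodule.exists_eq_span_pair_of_finrank_eq_two {P : Submodule K V}
    (hP : Module.finrank K P = 2) : ∃ x y : V, P = span K {x, y} := by
  have := Module.finite_of_finrank_eq_succ hP
  let b := Module.finBasisOfFinrankEq K P hP
  refine ⟨b 0, b 1, ?_⟩
  have hrange : range ![(b 0 : V), b 1] = P.subtype '' range b := by
    ext z
    simp [Fin.exists_fin_two, eq_comm, or_comm]
  rw [← Matrix.range_cons_cons_empty _ _ ![], hrange, span_image, b.span_eq, map_top,
    range_subtype]

end PairSpan

section SimpleWedge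

open ExteriorAlgebra

variable {V : Type*} [AddCommGroup V] [Module ℝ V]

theorem simpleWedge_eq_ιMulti (v w : V) : simpleWedge v w = exteriorPower.ιMulti ℝ 2 ![v, w] :=
  rfl

theorem coe_simpleWedge (v w : V) : (simpleWedge v w : ExteriorAlgebra ℝ V) = ι ℝ v * ι ℝ w := by
  simp [simpleWedge, ιMulti_apply]

theorem simpleWedge_smul_add_smul (x y : V) (a b c d : ℝ) :
    simpleWedge (a • x + b • y) (c • x + d • y) = (a * d - b * c) • simpleWedge x y := by
  have hyx : ι ℝ y * ι ℝ x = -(ι ℝ x * ι ℝ y) := eq_neg_of_add_eq_zero_right (ι_add_mul_swap x y)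
  apply Subtype.ext
  simp only [coe_simpleWedge, coe_smul, map_add, map_smul, add_mul, mul_add, smul_mul_assoc,
    mul_smul_comm, ι_sq_zero, hyx, smul_zero, smul_neg]
  module

theorem simpleWedge_smul_left (c : ℝ) (v w : V) :
    simpleWedge (c • v) w = c • simpleWedge v w := by
  simpa using simpleWedge_smul_add_smul v w c 0 0 1

theorem simpleWedge_self (v : V) : simpleWedge v v = 0 := by
  simpa using simpleWedge_smul_add_smul v v 1 0 1 0

theorem simpleWedge_zero_right (v : V) : simpleWedge v 0 = 0 := by
  simpa using simpleWedge_smul_add_smul v v 1 0 0 0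

theorem simpleWedge_eq_zero_of_not_linearIndependent {v w : V}
    (h : ¬LinearIndependent ℝ ![v, w]) : simpleWedge v w = 0 := by
  simp only [linearIndependent_fin2, Matrix.cons_val_one, Matrix.cons_val_zero, not_and_or,
    not_ne_iff, not_forall_not] at h
  rcases h with rfl | ⟨a, rfl⟩
  · exact simpleWedge_zero_right v
  · rw [simpleWedge_smul_left, simpleWedge_self, smul_zero]

theorem exists_simpleWedge_eq_smul_of_mem_span_pair {x y v w : V} (hv : v ∈ span ℝ {x, y})
    (hw : w ∈ span ℝ {x, y}) : ∃ t : ℝ, simpleWedge v w = t • simpleWedge x y := by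
  obtain ⟨a, b, rfl⟩ := mem_span_pair.1 hv
  obtain ⟨c, d, rfl⟩ := mem_span_pair.1 hw
  exact ⟨_, simpleWedge_smul_add_smul x y a b c d⟩

def simpleWedges (V : Type*) [AddCommGroup V] [Module ℝ V] : Set (⋀[ℝ]^2 V) :=
  {σ | ∃ v w : V, σ = simpleWedge v w}

theorem smul_mem_simpleWedges (c : ℝ) {σ : ⋀[ℝ]^2 V} (hσ : σ ∈ simpleWedges V) :
    c • σ ∈ simpleWedges V := by
  obtain ⟨v, w, rfl⟩ := hσ
  exact ⟨c • v, w, (simpleWedge_smul_left c v w).symm⟩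

theorem span_simpleWedges : span ℝ (simpleWedges V) = ⊤ := by
  rw [← exteriorPower.ιMulti_span ℝ 2 V]
  congr 1
  ext σ
  refine ⟨fun ⟨v, w, h⟩ => ⟨![v, w], h.symm⟩, fun ⟨f, h⟩ => ⟨f 0, f 1, ?_⟩⟩
  rw [← h, simpleWedge_eq_ιMulti]
  congr
  ext i; fin_cases i <;> rfl

theorem exists_calibrator_of_convexOn [FiniteDimensional ℝ V] {A : ⋀[ℝ]^2 V → ℝ}
    (hA_nonneg : ∀ σ ∈ simpleWedges V, 0 ≤ A σ)
    (hA_hom : ∀ c : ℝ, ∀ σ ∈ simpleWedges V, A (c • σ) = |c| * A σ) {g : ⋀[ℝ]^2 V → ℝ}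
    (hg : ConvexOn ℝ univ g) (hgA : ∀ σ ∈ simpleWedges V, g σ = A σ) (x y : V) :
    ∃ ω : ⋀[ℝ]^2 V →ₗ[ℝ] ℝ, (∀ σ ∈ simpleWedges V, |ω σ| ≤ A σ) ∧
      ∀ v w : V, v ∈ span ℝ {x, y} → w ∈ span ℝ {x, y} →
        |ω (simpleWedge v w)| = A (simpleWedge v w) := by
  set σ₀ := simpleWedge x y
  have hσ₀ : σ₀ ∈ simpleWedges V := ⟨x, y, rfl⟩
  have hray (t : ℝ) (ht : 0 ≤ t) : g (t • σ₀) = t * g σ₀ := by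
    rw [hgA _ (smul_mem_simpleWedges t hσ₀), hgA σ₀ hσ₀, hA_hom t σ₀ hσ₀, abs_of_nonneg ht]
  obtain ⟨ω, hωg, hωσ₀⟩ := hg.exists_linearMap_le_eq_of_ray hray
  have hωA (σ) (hσ : σ ∈ simpleWedges V) : ω σ ≤ A σ := hgA σ hσ ▸ hωg σ
  refine ⟨ω, fun σ hσ => abs_le.2 ⟨?_, hωA σ hσ⟩, fun v w hv hw => ?_⟩
  · have := hωA _ (smul_mem_simpleWedges (-1) hσ)
    rw [map_smul, hA_hom _ σ hσ] at this
    norm_num at this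
    linarith
  · obtain ⟨t, ht⟩ := exists_simpleWedge_eq_smul_of_mem_span_pair hv hw
    rw [ht, map_smul, smul_eq_mul, abs_mul, hA_hom t σ₀ hσ₀, hωσ₀, hgA σ₀ hσ₀,
      abs_of_nonneg (hA_nonneg σ₀ hσ₀)]

end SimpleWedge

theorem convex_extension_iff_calibrators_general
    (V : Type) [AddCommGroup V] [Module ℝ V] [FiniteDimensional ℝ V]
    (GC : Set (⋀[ℝ]^2 V))
    (hGC : GC = {σ : ⋀[ℝ]^2 V | ∃ v w : V, σ = simpleWedge v w})
    (A : (⋀[ℝ]^2 V) → ℝ)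
    (hA_nonneg : ∀ σ ∈ GC, 0 ≤ A σ)
    (hA_hom : ∀ (c : ℝ), ∀ σ ∈ GC, A (c • σ) = |c| * A σ) :
    (∃ g : (⋀[ℝ]^2 V) → ℝ, ConvexOn ℝ Set.univ g ∧ ∀ σ ∈ GC, g σ = A σ) ↔
      (∀ P : Submodule ℝ V, Module.finrank ℝ P = 2 →
        ∃ ω : (⋀[ℝ]^2 V) →ₗ[ℝ] ℝ,
          (∀ σ ∈ GC, |ω σ| ≤ A σ) ∧
          (∀ v w : V, v ∈ P → w ∈ P →
            |ω (simpleWedge v w)| = A (simpleWedge v w))) := by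
  change GC = simpleWedges V at hGC
  subst hGC
  constructor
  · rintro ⟨g, hg, hgA⟩ P hP
    obtain ⟨x, y, rfl⟩ := Submodule.exists_eq_span_pair_of_finrank_eq_two hP
    exact exists_calibrator_of_convexOn hA_nonneg hA_hom hg hgA x y
  · intro hcal
    refine exists_convexOn_eq_of_forall_exists_calibrator span_simpleWedges ?_
    rintro _ ⟨v, w, rfl⟩
    by_cases hvw : LinearIndependent ℝ ![v, w]
    · obtain ⟨ω, hωA, hωP⟩ := hcal _ (finrank_span_pair hvw)
      exact ⟨ω, hωA, hωP v w (subset_span (by simp)) (subset_span (by simp))⟩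
    · have hA0 : A 0 = 0 := by
        simpa using hA_hom 0 _ ⟨v, v, (simpleWedge_self v).symm⟩
      refine ⟨0, fun σ hσ => by simpa using hA_nonneg σ hσ, ?_⟩
      rw [simpleWedge_eq_zero_of_not_linearIndependent hvw, hA0, map_zero, abs_zero]

/-- A 2-dimensional density on a finite-dimensional vector space `V` (a continuous,
nonnegative, absolutely homogeneous function on the Grassmannian cone `GC₂(V)` of simple
2-vectors) admits a convex extension to `⋀²V` if and only if every 2-dimensional linear
subspace `P ⊆ V` admits a calibrator: a 2-form `ω` (linear functional on `⋀²V`) with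
`|ω(σ)| ≤ A(σ)` for all simple 2-vectors `σ`, with equality whenever `σ ∈ ⋀²P`. -/
theorem convex_extension_iff_calibrators
    (V : Type) [AddCommGroup V] [Module ℝ V] [FiniteDimensional ℝ V]
    (GC : Set (⋀[ℝ]^2 V))
    (hGC : GC = {σ : ⋀[ℝ]^2 V | ∃ v w : V, σ = simpleWedge v w})
    (A : (⋀[ℝ]^2 V) → ℝ)
    (hA_nonneg : ∀ σ ∈ GC, 0 ≤ A σ)
    (hA_hom : ∀ (c : ℝ), ∀ σ ∈ GC, A (c • σ) = |c| * A σ)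
    (m : ℕ) (e : (⋀[ℝ]^2 V) ≃ₗ[ℝ] EuclideanSpace ℝ (Fin m))
    (hA_cont : Continuous fun x => A (e.symm x)) :
    (∃ g : (⋀[ℝ]^2 V) → ℝ, ConvexOn ℝ Set.univ g ∧ ∀ σ ∈ GC, g σ = A σ) ↔
      (∀ P : Submodule ℝ V, Module.finrank ℝ P = 2 →
        ∃ ω : (⋀[ℝ]^2 V) →ₗ[ℝ] ℝ,
          (∀ σ ∈ GC, |ω σ| ≤ A σ) ∧
          (∀ v w : V, v ∈ P → w ∈ P →
            |ω (simpleWedge v w)| = A (simpleWedge v w))) :=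
  convex_extension_iff_calibrators_general V GC hGC A hA_nonneg hA_hom
end
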